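/- arXiv:2311.08777 — 4 statements merged into one kernel-verified Lean document; each statement's English description precedes it below -/
import Mathlib

section
/- If {u_k} is a sequence in 𝒟 with sup_k ‖u_k‖ < +∞, then there exist a subsequence {u_{k_j}} and a function u ∈ 𝒟 such that for every real κ with p ≤ κ < +∞ one has ∑_{n∈ℤ} |u_{k_j}(n) − u(n)|^κ → 0 as j → +∞, and also sup_{n∈ℤ} |u_{k_j}(n) − u(n)| → 0 as j → +∞; that is, 𝒟 is compactly embedded in ℓ^κ(ℤ,ℝ) for every p ≤ κ ≤ +∞. -/
/-!
Since `b → ∞`, a bounded set of `E` is tight in `ℓ^p`: off the finite set `{b < B}` each of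
its elements has `∑ |u n|^p ≤ C^p / B`. Compactness of `∏ₙ [-Mₙ, Mₙ]`, where
`Mₙ = (C^p / b n)^(1/p)`, gives a pointwise convergent subsequence, whose limit lies in `E` by
Fatou's lemma; tightness upgrades pointwise convergence to convergence in `ℓ^p`, which controls
the `ℓ^κ` norms (`κ ≥ p`) and the sup norm. Finally `E ⊆ 𝒟`: an element of `E` is eventually
bounded by `1`, where `|t^q log t^r| ≤ |r| / q`, and `c` is summable.
-/

noncomputable section

open Real Filter Set

namespace DPLap

/-- Forward difference operator. -/
def dlt (u : ℤ → ℝ) (n : ℤ) : ℝ := u (n + 1) - u n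

/-- Positive part `u⁺`. -/
def pos (u : ℤ → ℝ) : ℤ → ℝ := fun n => max (u n) 0

/-- Negative part `u⁻`. -/
def neg (u : ℤ → ℝ) : ℤ → ℝ := fun n => min (u n) 0

/-- Summand of the `E`-norm. -/
def nsum (a b : ℤ → ℝ) (p : ℕ) (u : ℤ → ℝ) (n : ℤ) : ℝ :=
  a n * |dlt u n| ^ p + b n * |u n| ^ p

/-- Membership in the space `E`. -/
def memE (a b : ℤ → ℝ) (p : ℕ) (u : ℤ → ℝ) : Prop :=
  Summable (nsum a b p u)

/-- The norm `‖u‖ = (∑ [a|Δu|^p + b|u|^p])^(1/p)`. -/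
def dnorm (a b : ℤ → ℝ) (p : ℕ) (u : ℤ → ℝ) : ℝ :=
  (∑' n : ℤ, nsum a b p u n) ^ ((p : ℝ)⁻¹)

/-- Summand `c(n)|u(n)|^q ln(|u(n)|^r)` of the logarithmic term (with the
convention `0^q ln 0 = 0`, automatic from `Real.rpow` and `Real.log`). -/
def logSummand (c : ℤ → ℝ) (q r : ℝ) (u : ℤ → ℝ) (n : ℤ) : ℝ :=
  c n * |u n| ^ q * Real.log (|u n| ^ r)

/-- Membership in `𝒟`. -/
def memD (a b c : ℤ → ℝ) (p : ℕ) (q r : ℝ) (u : ℤ → ℝ) : Prop :=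
  memE a b p u ∧ Summable (logSummand c q r u)

/-- The energy functional `I`. -/
def En (a b c : ℤ → ℝ) (p : ℕ) (q r : ℝ) (u : ℤ → ℝ) : ℝ :=
  (1 / (p : ℝ)) * dnorm a b p u ^ p
    + (r / q ^ 2) * ∑' n : ℤ, c n * |u n| ^ q
    - (1 / q) * ∑' n : ℤ, logSummand c q r u n

/-- The pairing `⟨I'(u), v⟩`. -/
def pr (a b c : ℤ → ℝ) (p : ℕ) (q r : ℝ) (u v : ℤ → ℝ) : ℝ :=
  (∑' n : ℤ, (a n * |dlt u n| ^ (p - 2) * dlt u n * dlt v n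
      + b n * |u n| ^ (p - 2) * u n * v n))
    - ∑' n : ℤ, c n * |u n| ^ (q - 2) * u n * v n * Real.log (|u n| ^ r)

/-- The Nehari set `𝒩`. -/
def Nset (a b c : ℤ → ℝ) (p : ℕ) (q r : ℝ) : Set (ℤ → ℝ) :=
  {u | memD a b c p q r u ∧ u ≠ 0 ∧ pr a b c p q r u u = 0}

/-- The sign-changing Nehari set `ℳ`. -/
def Mset (a b c : ℤ → ℝ) (p : ℕ) (q r : ℝ) : Set (ℤ → ℝ) :=
  {u | memD a b c p q r u ∧ pos u ≠ 0 ∧ neg u ≠ 0 ∧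
      pr a b c p q r u (pos u) = 0 ∧ pr a b c p q r u (neg u) = 0}

/-- `m* = inf_ℳ I`. -/
def mStar (a b c : ℤ → ℝ) (p : ℕ) (q r : ℝ) : ℝ :=
  sInf (En a b c p q r '' Mset a b c p q r)

/-- `c* = inf_𝒩 I`. -/
def cStar (a b c : ℤ → ℝ) (p : ℕ) (q r : ℝ) : ℝ :=
  sInf (En a b c p q r '' Nset a b c p q r)

open scoped Topology

section Summation

variable {ι α : Type*}

theorem summable_of_summable_mul_of_tendsto_atTop {w f : ι → ℝ}
    (hw : Tendsto w cofinite atTop) (hf : ∀ n, 0 ≤ f n) (hwf : Summable fun n => w n * f n) :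
    Summable f := by
  refine hwf.of_norm_bounded_eventually ?_
  filter_upwards [hw.eventually_ge_atTop 1] with n hn
  rw [Real.norm_of_nonneg (hf n)]
  exact le_mul_of_one_le_left (hf n) hn

theorem summable_and_tsum_le_of_tendsto {l : Filter α} [l.NeBot] {f : α → ι → ℝ} {g : ι → ℝ}
    {K : ℝ} (hf0 : ∀ j n, 0 ≤ f j n) (hf : ∀ j, Summable (f j)) (hK : ∀ j, ∑' n, f j n ≤ K)
    (hlim : ∀ n, Tendsto (fun j => f j n) l (𝓝 (g n))) : Summable g ∧ ∑' n, g n ≤ K := by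
  have hg0 : 0 ≤ g := fun n => ge_of_tendsto (hlim n) (Eventually.of_forall fun j => hf0 j n)
  have hsum : ∀ s : Finset ι, ∑ n ∈ s, g n ≤ K := fun s =>
    le_of_tendsto (tendsto_finsetSum s fun n _ => hlim n)
      (Eventually.of_forall fun j => ((hf j).sum_le_tsum s fun n _ => hf0 j n).trans (hK j))
  exact ⟨summable_of_sum_le hg0 hsum, Real.tsum_le_of_sum_le hg0 hsum⟩

theorem tendsto_tsum_zero_of_tsum_mul_le {l : Filter α} {w : ι → ℝ} {f : α → ι → ℝ} {K : ℝ}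
    (hw0 : ∀ n, 0 ≤ w n) (hw : Tendsto w cofinite atTop) (hf0 : ∀ j n, 0 ≤ f j n)
    (hlim : ∀ n, Tendsto (fun j => f j n) l (𝓝 0))
    (hwf : ∀ j, Summable fun n => w n * f j n) (hK : ∀ j, ∑' n, w n * f j n ≤ K) :
    Tendsto (fun j => ∑' n, f j n) l (𝓝 0) := by
  rw [Metric.tendsto_nhds]
  intro ε hε
  obtain ⟨B, hB0, hKB⟩ : ∃ B, 0 < B ∧ K / B < ε / 2 :=
    ((eventually_gt_atTop 0).and ((tendsto_const_nhds.div_atTop tendsto_id).eventually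
      (gt_mem_nhds (half_pos hε)))).exists
  set F := (eventually_cofinite.1 (hw.eventually_ge_atTop B)).toFinset
  have htail : ∀ j, ∑' n, f j n ≤ ∑ n ∈ F, f j n + K / B := by
    intro j
    have hfj := summable_of_summable_mul_of_tendsto_atTop hw (hf0 j) (hwf j)
    have hwfB : Summable fun n => w n * f j n / B := (hwf j).div_const B
    rw [← hfj.sum_add_tsum_compl (s := F)]
    gcongr
    calc ∑' n : ↑(↑F : Set ι)ᶜ, f j n
        ≤ ∑' n : ↑(↑F : Set ι)ᶜ, w n * f j n / B := by
          refine Summable.tsum_le_tsum (fun n => ?_) (hfj.subtype _) (hwfB.subtype _)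
          have hn : B ≤ w n := by simpa [F] using n.2
          rw [le_div_iff₀ hB0]
          simpa only [mul_comm (w n)] using mul_le_mul_of_nonneg_left hn (hf0 j n)
      _ ≤ ∑' n, w n * f j n / B :=
          hwfB.tsum_subtype_le _ _ fun n => div_nonneg (mul_nonneg (hw0 n) (hf0 j n)) hB0.le
      _ ≤ K / B := by rw [tsum_div_const]; gcongr; exact hK j
  have hfin : ∀ᶠ j in l, ∑ n ∈ F, f j n < ε / 2 := by
    refine (tendsto_finsetSum F fun n _ => hlim n).eventually (gt_mem_nhds ?_)
    simpa using half_pos hε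
  filter_upwards [hfin] with j hj
  rw [Real.dist_0_eq_abs, abs_of_nonneg (tsum_nonneg (hf0 j))]
  linarith [htail j]

theorem abs_le_rpow_inv_of_pow_le {x S : ℝ} {p : ℕ} (hp : p ≠ 0) (h : |x| ^ p ≤ S) :
    |x| ≤ S ^ (p : ℝ)⁻¹ := by
  rw [le_rpow_inv_iff_of_pos (abs_nonneg x) ((pow_nonneg (abs_nonneg x) p).trans h)
    (Nat.cast_pos.2 (Nat.pos_of_ne_zero hp)), rpow_natCast]
  exact h

theorem tsum_abs_rpow_le {d : ι → ℝ} {p : ℕ} (hp : p ≠ 0) {κ : ℝ} (hκ : (p : ℝ) ≤ κ)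
    (hd : Summable fun n => |d n| ^ p) :
    ∑' n, |d n| ^ κ ≤ (∑' n, |d n| ^ p) ^ (κ / p) := by
  set S := ∑' n, |d n| ^ p
  have hp0 : (0 : ℝ) < p := Nat.cast_pos.2 (Nat.pos_of_ne_zero hp)
  have hS : 0 ≤ S := tsum_nonneg fun n => by positivity
  have hpt : ∀ n, |d n| ^ κ ≤ |d n| ^ p * S ^ ((κ - p) / p) := by
    intro n
    have hdn : |d n| ≤ S ^ (p : ℝ)⁻¹ :=
      abs_le_rpow_inv_of_pow_le hp (hd.le_tsum n fun m _ => by positivity)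
    calc |d n| ^ κ = |d n| ^ p * |d n| ^ (κ - p) := by
          rw [← rpow_natCast, ← rpow_add' (abs_nonneg _) (by linarith), add_sub_cancel]
      _ ≤ |d n| ^ p * (S ^ (p : ℝ)⁻¹) ^ (κ - p) := by gcongr
      _ = |d n| ^ p * S ^ ((κ - p) / p) := by rw [← rpow_mul hS, inv_mul_eq_div]
  calc ∑' n, |d n| ^ κ ≤ ∑' n, |d n| ^ p * S ^ ((κ - p) / p) :=
        Summable.tsum_le_tsum hpt
          ((hd.mul_right _).of_nonneg_of_le (fun n => by positivity) hpt) (hd.mul_right _)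
    _ = S ^ (κ / p) := by
      rw [tsum_mul_right, ← rpow_one_add' hS (by positivity)]
      congr 1
      field_simp
      ring

theorem tendsto_tsum_abs_rpow_zero {l : Filter α} {d : α → ι → ℝ} {p : ℕ} (hp : p ≠ 0)
    {κ : ℝ} (hκ : (p : ℝ) ≤ κ) (hd : ∀ j, Summable fun n => |d j n| ^ p)
    (hlim : Tendsto (fun j => ∑' n, |d j n| ^ p) l (𝓝 0)) :
    Tendsto (fun j => ∑' n, |d j n| ^ κ) l (𝓝 0) := by
  have hp0 : (0 : ℝ) < p := Nat.cast_pos.2 (Nat.pos_of_ne_zero hp)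
  have hκ0 : 0 < κ / p := div_pos (hp0.trans_le hκ) hp0
  refine squeeze_zero (fun j => tsum_nonneg fun n => by positivity)
    (fun j => tsum_abs_rpow_le hp hκ (hd j)) ?_
  simpa [zero_rpow hκ0.ne'] using hlim.rpow_const (Or.inr hκ0.le)

theorem eventually_abs_le_of_tendsto_tsum_pow {l : Filter α} {d : α → ι → ℝ} {p : ℕ}
    (hp : p ≠ 0) (hd : ∀ j, Summable fun n => |d j n| ^ p)
    (hlim : Tendsto (fun j => ∑' n, |d j n| ^ p) l (𝓝 0)) {ε : ℝ} (hε : 0 < ε) :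
    ∀ᶠ j in l, ∀ n, |d j n| ≤ ε := by
  have hp0 : 0 < (p : ℝ)⁻¹ := inv_pos.2 (Nat.cast_pos.2 (Nat.pos_of_ne_zero hp))
  have hroot : Tendsto (fun j => (∑' n, |d j n| ^ p) ^ (p : ℝ)⁻¹) l (𝓝 0) := by
    simpa [zero_rpow hp0.ne'] using hlim.rpow_const (Or.inr hp0.le)
  filter_upwards [hroot.eventually (ge_mem_nhds hε)] with j hj n
  exact (abs_le_rpow_inv_of_pow_le hp ((hd j).le_tsum n fun m _ => by positivity)).trans hj

theorem exists_strictMono_tendsto_of_abs_le [Countable ι] {u : ℕ → ι → ℝ} (M : ι → ℝ)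
    (hM : ∀ k n, |u k n| ≤ M n) :
    ∃ v : ι → ℝ, ∃ φ : ℕ → ℕ, StrictMono φ ∧
      ∀ n, Tendsto (fun j => u (φ j) n) atTop (𝓝 (v n)) := by
  obtain ⟨v, -, φ, hφ, hlim⟩ := (isCompact_univ_pi fun n => isCompact_Icc).tendsto_subseq
    (x := u) fun k n _ => abs_le.1 (hM k n)
  exact ⟨v, φ, hφ, tendsto_pi_nhds.1 hlim⟩

end Summation

theorem abs_rpow_mul_log_rpow_le {q : ℝ} (hq : 0 < q) (r : ℝ) {t : ℝ} (ht0 : 0 ≤ t)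
    (ht1 : t ≤ 1) : |t ^ q * Real.log (t ^ r)| ≤ |r| / q := by
  rcases ht0.eq_or_lt with rfl | ht
  · simp [zero_rpow hq.ne', div_nonneg (abs_nonneg r) hq.le]
  · rw [log_rpow ht, mul_left_comm, abs_mul, mul_comm (t ^ q), div_eq_mul_one_div]
    exact mul_le_mul_of_nonneg_left (abs_log_mul_self_rpow_lt t q ht ht1 hq).le (abs_nonneg r)

theorem summable_logSummand {c : ℤ → ℝ} (hc : Summable c) {q : ℝ} (hq : 0 < q) (r : ℝ)
    {u : ℤ → ℝ} (hu : ∀ᶠ n in cofinite, |u n| ≤ 1) : Summable (logSummand c q r u) := by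
  refine (hc.abs.mul_right (|r| / q)).of_norm_bounded_eventually ?_
  filter_upwards [hu] with n hn
  rw [Real.norm_eq_abs, logSummand, mul_assoc, abs_mul]
  exact mul_le_mul_of_nonneg_left (abs_rpow_mul_log_rpow_le hq r (abs_nonneg _) hn)
    (abs_nonneg _)

section Energy

variable {a b : ℤ → ℝ} {p : ℕ}

theorem nsum_nonneg (ha : ∀ n, 0 ≤ a n) (hb : ∀ n, 0 ≤ b n) (u : ℤ → ℝ) (n : ℤ) :
    0 ≤ nsum a b p u n := by
  unfold nsum
  have := ha n
  have := hb n
  positivity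

theorem mul_abs_pow_le_nsum (ha : ∀ n, 0 ≤ a n) (u : ℤ → ℝ) (n : ℤ) :
    b n * |u n| ^ p ≤ nsum a b p u n :=
  le_add_of_nonneg_left (mul_nonneg (ha n) (by positivity))

theorem tsum_nsum_le_of_dnorm_le (ha : ∀ n, 0 ≤ a n) (hb : ∀ n, 0 ≤ b n) (hp : p ≠ 0)
    {u : ℤ → ℝ} {C : ℝ} (hC : dnorm a b p u ≤ C) : ∑' n, nsum a b p u n ≤ C ^ p := by
  have h0 : 0 ≤ ∑' n, nsum a b p u n := tsum_nonneg (nsum_nonneg ha hb u)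
  rw [← rpow_inv_natCast_pow h0 hp]
  exact pow_le_pow_left₀ (rpow_nonneg h0 _) hC p

theorem abs_le_of_tsum_nsum_le (ha : ∀ n, 0 ≤ a n) (hb : ∀ n, 0 ≤ b n) (hp : p ≠ 0)
    {u : ℤ → ℝ} (hu : memE a b p u) {K : ℝ} (hK : ∑' n, nsum a b p u n ≤ K) {n : ℤ}
    (hbn : 0 < b n) : |u n| ≤ (K / b n) ^ (p : ℝ)⁻¹ :=
  abs_le_rpow_inv_of_pow_le hp <| (le_div_iff₀' hbn).2 <| (mul_abs_pow_le_nsum ha u n).trans <|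
    (hu.le_tsum n fun m _ => nsum_nonneg ha hb u m).trans hK

theorem memD_of_memE (ha : ∀ n, 0 ≤ a n) (hb₀ : ∀ n, 0 ≤ b n) (hb : Tendsto b cofinite atTop)
    (hp : p ≠ 0) {c : ℤ → ℝ} (hc : Summable c) {q : ℝ} (hq : 0 < q) (r : ℝ) {u : ℤ → ℝ}
    (hu : memE a b p u) : memD a b c p q r u := by
  have hup : Summable fun n => |u n| ^ p :=
    summable_of_summable_mul_of_tendsto_atTop hb (fun n => by positivity)
      (hu.of_nonneg_of_le (fun n => mul_nonneg (hb₀ n) (by positivity)) (mul_abs_pow_le_nsum ha u))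
  refine ⟨hu, summable_logSummand hc hq r ?_⟩
  filter_upwards [hup.tendsto_cofinite_zero.eventually (ge_mem_nhds one_pos)] with n hn
  exact (pow_le_one_iff_of_nonneg (abs_nonneg _) hp).1 hn

theorem tendsto_nsum {α : Type*} {l : Filter α} {g : α → ℤ → ℝ} {v : ℤ → ℝ}
    (hlim : ∀ n, Tendsto (fun j => g j n) l (𝓝 (v n))) (n : ℤ) :
    Tendsto (fun j => nsum a b p (g j) n) l (𝓝 (nsum a b p v n)) :=
  ((((hlim (n + 1)).sub (hlim n)).abs.pow p).const_mul (a n)).add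
    (((hlim n).abs.pow p).const_mul (b n))

theorem summable_and_tsum_mul_abs_sub_pow_le (ha : ∀ n, 0 ≤ a n) (hb : ∀ n, 0 ≤ b n)
    {u v : ℤ → ℝ} (hu : memE a b p u) (hv : memE a b p v) :
    Summable (fun n => b n * |u n - v n| ^ p) ∧
      ∑' n, b n * |u n - v n| ^ p ≤
        2 ^ (p - 1) * (∑' n, nsum a b p u n + ∑' n, nsum a b p v n) := by
  have hpt : ∀ n, b n * |u n - v n| ^ p ≤ 2 ^ (p - 1) * (nsum a b p u n + nsum a b p v n) := by
    intro n
    calc b n * |u n - v n| ^ p ≤ b n * (2 ^ (p - 1) * (|u n| ^ p + |v n| ^ p)) := by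
          gcongr
          · exact hb n
          · exact (pow_le_pow_left₀ (abs_nonneg _) (abs_sub _ _) p).trans
              (add_pow_le (abs_nonneg _) (abs_nonneg _) p)
      _ = 2 ^ (p - 1) * (b n * |u n| ^ p + b n * |v n| ^ p) := by ring
      _ ≤ 2 ^ (p - 1) * (nsum a b p u n + nsum a b p v n) := by
          gcongr <;> exact mul_abs_pow_le_nsum ha _ n
  have hsum : Summable fun n => 2 ^ (p - 1) * (nsum a b p u n + nsum a b p v n) :=
    (hu.add hv).mul_left _
  refine ⟨hsum.of_nonneg_of_le (fun n => mul_nonneg (hb n) (by positivity)) hpt, ?_⟩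
  rw [← (hu.tsum_add hv), ← tsum_mul_left]
  exact Summable.tsum_le_tsum hpt
    (hsum.of_nonneg_of_le (fun n => mul_nonneg (hb n) (by positivity)) hpt) hsum

end Energy

theorem stmt3_general (p : ℕ) (hp2 : 2 ≤ p)
    (q r : ℝ) (hpq : (p : ℝ) < q)
    (a b c : ℤ → ℝ)
    (ha : ∀ n, 0 < a n) (hb : ∀ n, 0 < b n)
    (hbinf : Tendsto b cofinite atTop)
    (hcsum : Summable c)
    (u : ℕ → ℤ → ℝ) (hu : ∀ k, memD a b c p q r (u k))
    (hbdd : ∃ C : ℝ, ∀ k, dnorm a b p (u k) ≤ C) :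
    ∃ φ : ℕ → ℕ, StrictMono φ ∧
      ∃ v : ℤ → ℝ, memD a b c p q r v ∧
        (∀ κ : ℝ, (p : ℝ) ≤ κ →
          Tendsto (fun j => ∑' n : ℤ, |u (φ j) n - v n| ^ κ) atTop (nhds 0)) ∧
        (∀ ε : ℝ, 0 < ε → ∃ N : ℕ, ∀ j ≥ N, ∀ n : ℤ, |u (φ j) n - v n| ≤ ε) := by
  obtain ⟨C, hC⟩ := hbdd
  have hp : p ≠ 0 := by omega
  have ha₀ : ∀ n, 0 ≤ a n := fun n => (ha n).le
  have hb₀ : ∀ n, 0 ≤ b n := fun n => (hb n).le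
  have hE : ∀ k, ∑' n, nsum a b p (u k) n ≤ C ^ p := fun k =>
    tsum_nsum_le_of_dnorm_le ha₀ hb₀ hp (hC k)
  obtain ⟨v, φ, hφ, hlim⟩ := exists_strictMono_tendsto_of_abs_le
    (fun n => (C ^ p / b n) ^ (p : ℝ)⁻¹) fun k n =>
    abs_le_of_tsum_nsum_le ha₀ hb₀ hp (hu k).1 (hE k) (hb n)
  obtain ⟨hvE, hvC⟩ := summable_and_tsum_le_of_tendsto
    (fun j => nsum_nonneg ha₀ hb₀ (u (φ j))) (fun j => (hu (φ j)).1) (fun j => hE (φ j))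
    (tendsto_nsum hlim)
  have hdiff := fun j : ℕ => summable_and_tsum_mul_abs_sub_pow_le ha₀ hb₀ (hu (φ j)).1 hvE
  have hdp : ∀ j, Summable fun n => |u (φ j) n - v n| ^ p := fun j =>
    summable_of_summable_mul_of_tendsto_atTop hbinf (fun n => by positivity) (hdiff j).1
  have hS : Tendsto (fun j => ∑' n, |u (φ j) n - v n| ^ p) atTop (𝓝 0) := by
    refine tendsto_tsum_zero_of_tsum_mul_le (K := 2 ^ (p - 1) * (C ^ p + C ^ p)) hb₀ hbinf
      (fun j n => by positivity) (fun n => ?_) (fun j => (hdiff j).1)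
      (fun j => (hdiff j).2.trans (by gcongr; exact hE _))
    simpa [zero_pow hp] using (tendsto_sub_nhds_zero_iff.2 (hlim n)).abs.pow p
  refine ⟨φ, hφ, v, memD_of_memE ha₀ hb₀ hbinf hp hcsum ((Nat.cast_nonneg p).trans_lt hpq) r hvE,
    fun κ hκ => tendsto_tsum_abs_rpow_zero hp hκ hdp hS, fun ε hε => ?_⟩
  exact eventually_atTop.1 (eventually_abs_le_of_tendsto_tsum_pow hp hdp hS hε)

theorem stmt3 (p : ℕ) (hp2 : 2 ≤ p) (hpe : Even p)
    (q r : ℝ) (hpq : (p : ℝ) < q) (hr : 1 ≤ r)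
    (a b c : ℤ → ℝ)
    (ha : ∀ n, 0 < a n) (hb : ∀ n, 0 < b n) (hc : ∀ n, 0 < c n)
    (b0 : ℝ) (hb0 : 0 < b0) (hbb : ∀ n, b0 ≤ b n)
    (hbinf : Tendsto b cofinite atTop)
    (c0 : ℝ) (hc0 : 0 < c0) (hcc : ∀ n, c n ≤ c0)
    (hcsum : Summable c)
    (u : ℕ → ℤ → ℝ) (hu : ∀ k, memD a b c p q r (u k))
    (hbdd : ∃ C : ℝ, ∀ k, dnorm a b p (u k) ≤ C) :
    ∃ φ : ℕ → ℕ, StrictMono φ ∧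
      ∃ v : ℤ → ℝ, memD a b c p q r v ∧
        (∀ κ : ℝ, (p : ℝ) ≤ κ →
          Tendsto (fun j => ∑' n : ℤ, |u (φ j) n - v n| ^ κ) atTop (nhds 0)) ∧
        (∀ ε : ℝ, 0 < ε → ∃ N : ℕ, ∀ j ≥ N, ∀ n : ℤ, |u (φ j) n - v n| ≤ ε) :=
  stmt3_general p hp2 q r hpq a b c ha hb hbinf hcsum u hu hbdd

end DPLap
end
end

section
/- For every u ∈ 𝒟 and every real t ≥ 0 one has I(u) ≥ I(t·u) + ((1−t^q)/q)·⟨I'(u),u⟩ + ((1−t^p)/p − (1−t^q)/q)·‖u‖^p. -/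
noncomputable section

open Real Filter Set

namespace DPLap

lemma aux_pow (p : ℕ) (hp2 : 2 ≤ p) (x : ℝ) : x ^ 2 * |x| ^ (p - 2) = |x| ^ p := by
  rw [← sq_abs, ← pow_add]
  congr 1
  omega

lemma aux_rpow (q : ℝ) (hq : 0 < q) (x : ℝ) : x ^ 2 * |x| ^ (q - 2) = |x| ^ q := by
  rcases eq_or_ne x 0 with h | h
  · simp [h, Real.zero_rpow hq.ne']
  · have hx : (0:ℝ) < |x| := abs_pos.mpr h
    have h2 : x ^ 2 * |x| ^ (q - 2) = |x| ^ (2:ℝ) * |x| ^ (q - 2) := by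
      rw [Real.rpow_two, sq_abs]
    rw [h2, ← Real.rpow_add hx]
    norm_num

lemma aux_key (q t : ℝ) (hq : 0 < q) (ht : 0 ≤ t) :
    t ^ q * (1 - q * Real.log t) ≤ 1 := by
  rcases ht.eq_or_lt with h | h
  · rw [← h, Real.zero_rpow hq.ne']
    norm_num
  · have h1 : t ^ q = Real.exp (Real.log t * q) := Real.rpow_def_of_pos h q
    have h2 : 1 - Real.log t * q ≤ Real.exp (-(Real.log t * q)) := by
      have := Real.add_one_le_exp (-(Real.log t * q)); linarith
    calc t ^ q * (1 - q * Real.log t)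
        = Real.exp (Real.log t * q) * (1 - Real.log t * q) := by rw [h1]; ring
      _ ≤ Real.exp (Real.log t * q) * Real.exp (-(Real.log t * q)) :=
          mul_le_mul_of_nonneg_left h2 (Real.exp_pos _).le
      _ = 1 := by rw [← Real.exp_add]; simp

theorem stmt7 (p : ℕ) (hp2 : 2 ≤ p) (hpe : Even p)
    (q r : ℝ) (hpq : (p : ℝ) < q) (hr : 1 ≤ r)
    (a b c : ℤ → ℝ)
    (ha : ∀ n, 0 < a n) (hb : ∀ n, 0 < b n) (hc : ∀ n, 0 < c n)
    (b0 : ℝ) (hb0 : 0 < b0) (hbb : ∀ n, b0 ≤ b n)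
    (hbinf : Tendsto b cofinite atTop)
    (c0 : ℝ) (hc0 : 0 < c0) (hcc : ∀ n, c n ≤ c0)
    (hcsum : Summable c)
    (u : ℤ → ℝ) (hu : memD a b c p q r u) (t : ℝ) (ht : 0 ≤ t) :
    En a b c p q r (fun n => t * u n)
        + ((1 - t ^ q) / q) * pr a b c p q r u u
        + ((1 - t ^ p) / (p : ℝ) - (1 - t ^ q) / q) * dnorm a b p u ^ p
      ≤ En a b c p q r u := by
  obtain ⟨huE, huL⟩ := hu
  have hpn0 : p ≠ 0 := by omega
  have hpR : (0:ℝ) < p := by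
    have : (2:ℝ) ≤ p := by exact_mod_cast hp2
    linarith
  have hq0 : (0:ℝ) < q := lt_trans hpR hpq
  have hqne : q ≠ 0 := hq0.ne'
  have hpne : (p:ℝ) ≠ 0 := hpR.ne'
  -- nonnegativity of the three sums
  have hA0 : 0 ≤ ∑' n, nsum a b p u n :=
    tsum_nonneg fun n => add_nonneg (mul_nonneg (ha n).le (by positivity))
      (mul_nonneg (hb n).le (by positivity))
  have hS0 : 0 ≤ ∑' (n : ℤ), c n * |u n| ^ q :=
    tsum_nonneg fun n => mul_nonneg (hc n).le (Real.rpow_nonneg (abs_nonneg _) _)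
  -- dnorm u ^ p = A
  have hdn : dnorm a b p u ^ p = ∑' n, nsum a b p u n := by
    unfold dnorm
    exact Real.rpow_inv_natCast_pow hA0 hpn0
  -- scaling of nsum
  have hnt : ∀ n, nsum a b p (fun m => t * u m) n = t ^ p * nsum a b p u n := by
    intro n
    show a n * |t * u (n + 1) - t * u n| ^ p + b n * |t * u n| ^ p = _
    rw [show t * u (n + 1) - t * u n = t * (u (n + 1) - u n) by ring, abs_mul, abs_mul,
      abs_of_nonneg ht]
    show a n * (t * |dlt u n|) ^ p + b n * (t * |u n|) ^ p = t ^ p * nsum a b p u n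
    unfold nsum
    rw [mul_pow, mul_pow]
    ring
  have hdnt : dnorm a b p (fun n => t * u n) ^ p = t ^ p * ∑' n, nsum a b p u n := by
    unfold dnorm
    rw [tsum_congr hnt, tsum_mul_left]
    exact Real.rpow_inv_natCast_pow (mul_nonneg (pow_nonneg ht p) hA0) hpn0
  -- summability of c |u|^q
  have hbsum : Summable (fun n => b n * |u n| ^ p) :=
    huE.of_nonneg_of_le (fun n => mul_nonneg (hb n).le (by positivity))
      (fun n => le_add_of_nonneg_left (mul_nonneg (ha n).le (by positivity)))
  have hT0 : 0 ≤ ∑' n, b n * |u n| ^ p :=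
    tsum_nonneg fun n => mul_nonneg (hb n).le (by positivity)
  set T := ∑' n, b n * |u n| ^ p with hTdef
  set K := (T / b0) ^ ((p:ℝ)⁻¹) with hKdef
  have hK0 : 0 ≤ K := Real.rpow_nonneg (div_nonneg hT0 hb0.le) _
  have hub : ∀ n, |u n| ≤ K := by
    intro n
    have h1 : b n * |u n| ^ p ≤ T :=
      Summable.le_tsum hbsum n fun j _ => mul_nonneg (hb j).le (by positivity)
    have h2 : |u n| ^ p ≤ T / b0 := by
      rw [le_div_iff₀ hb0]
      calc |u n| ^ p * b0 ≤ |u n| ^ p * b n := by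
            exact mul_le_mul_of_nonneg_left (hbb n) (by positivity)
        _ ≤ T := by linarith [h1]
    calc |u n| = (|u n| ^ p) ^ ((p:ℝ)⁻¹) :=
          (Real.pow_rpow_inv_natCast (abs_nonneg _) hpn0).symm
      _ ≤ K := Real.rpow_le_rpow (by positivity) h2 (by positivity)
  have hS : Summable (fun n => c n * |u n| ^ q) := by
    refine (hcsum.mul_right (K ^ q)).of_nonneg_of_le
      (fun n => mul_nonneg (hc n).le (Real.rpow_nonneg (abs_nonneg _) _)) (fun n => ?_)
    exact mul_le_mul_of_nonneg_left
      (Real.rpow_le_rpow (abs_nonneg _) (hub n) hq0.le) (hc n).le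
  -- scaling of the q-sum
  have hSt : (∑' (n : ℤ), c n * |t * u n| ^ q) = t ^ q * ∑' (n : ℤ), c n * |u n| ^ q := by
    rw [← tsum_mul_left]
    refine tsum_congr fun n => ?_
    rw [abs_mul, abs_of_nonneg ht, Real.mul_rpow ht (abs_nonneg _)]
    ring
  -- scaling of the log-sum
  have hLpt : ∀ n, logSummand c q r (fun m => t * u m) n
      = t ^ q * logSummand c q r u n + (r * t ^ q * Real.log t) * (c n * |u n| ^ q) := by
    intro n
    show c n * |t * u n| ^ q * Real.log (|t * u n| ^ r) = _
    unfold logSummand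
    rcases ht.eq_or_lt with h | hT
    · rw [← h]
      simp [Real.zero_rpow hqne]
    · rcases eq_or_ne (u n) 0 with h0 | h0
      · simp [h0, Real.zero_rpow hqne]
      · have hut : 0 < |u n| := abs_pos.mpr h0
        have htu : 0 < t * |u n| := mul_pos hT hut
        rw [abs_mul, abs_of_nonneg ht, Real.mul_rpow ht (abs_nonneg _),
          Real.log_rpow htu, Real.log_mul hT.ne' hut.ne', Real.log_rpow hut]
        ring
  have hLt : (∑' n, logSummand c q r (fun m => t * u m) n)
      = t ^ q * (∑' n, logSummand c q r u n)
        + (r * t ^ q * Real.log t) * ∑' (n : ℤ), c n * |u n| ^ q := by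
    rw [tsum_congr hLpt, Summable.tsum_add (huL.mul_left _) (hS.mul_left _), tsum_mul_left,
      tsum_mul_left]
  -- pr u u = A - L
  have hpr : pr a b c p q r u u
      = (∑' n, nsum a b p u n) - ∑' n, logSummand c q r u n := by
    unfold pr
    have e1 : (∑' (n : ℤ), (a n * |dlt u n| ^ (p - 2) * dlt u n * dlt u n
        + b n * |u n| ^ (p - 2) * u n * u n)) = ∑' n, nsum a b p u n := by
      refine tsum_congr fun n => ?_
      unfold nsum
      rw [show a n * |dlt u n| ^ (p - 2) * dlt u n * dlt u n
            = a n * (dlt u n ^ 2 * |dlt u n| ^ (p - 2)) by ring,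
        show b n * |u n| ^ (p - 2) * u n * u n
            = b n * (u n ^ 2 * |u n| ^ (p - 2)) by ring,
        aux_pow p hp2, aux_pow p hp2]
    have e2 : (∑' (n : ℤ), c n * |u n| ^ (q - 2) * u n * u n * Real.log (|u n| ^ r))
        = ∑' n, logSummand c q r u n := by
      refine tsum_congr fun n => ?_
      unfold logSummand
      rw [show c n * |u n| ^ (q - 2) * u n * u n * Real.log (|u n| ^ r)
            = c n * (u n ^ 2 * |u n| ^ (q - 2)) * Real.log (|u n| ^ r) by ring,
        aux_rpow q hq0]
    rw [e1, e2]
  -- assemble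
  simp only [En]
  rw [hdnt, hdn, hSt, hLt, hpr]
  set A := ∑' n, nsum a b p u n
  set S := ∑' (n : ℤ), c n * |u n| ^ q
  set L := ∑' n, logSummand c q r u n
  have hD : t ^ q * (1 - q * Real.log t) ≤ 1 := aux_key q t hq0 ht
  have hcoef : 0 ≤ r / q ^ 2 * S :=
    mul_nonneg (div_nonneg (by linarith) (by positivity)) hS0
  have hmul : r / q ^ 2 * S * (t ^ q * (1 - q * Real.log t)) ≤ r / q ^ 2 * S * 1 :=
    mul_le_mul_of_nonneg_left hD hcoef
  have hid : (1 / (p:ℝ)) * A + r / q ^ 2 * S - 1 / q * L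
      - ((1 / (p:ℝ)) * (t ^ p * A) + r / q ^ 2 * (t ^ q * S)
        - 1 / q * (t ^ q * L + (r * t ^ q * Real.log t) * S)
        + ((1 - t ^ q) / q) * (A - L)
        + ((1 - t ^ p) / (p:ℝ) - (1 - t ^ q) / q) * A)
      = r / q ^ 2 * S * (1 - t ^ q * (1 - q * Real.log t)) := by
    field_simp
    ring
  linarith [hmul, hid]

end DPLap
end
end

section
/- For every u ∈ 𝒩 one has I(u) = sup_{t ≥ 0} I(t·u); in particular the supremum is attained at t = 1. -/
noncomputable section

open Real Filter Set

namespace DPLap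

private lemma slog (s : ℝ) (hs : 0 ≤ s) : s - 1 ≤ s * Real.log s := by
  rcases eq_or_lt_of_le hs with h | h
  · simp [← h]
  · have h1 := Real.log_le_sub_one_of_pos (inv_pos.mpr h)
    rw [Real.log_inv] at h1
    have h2 := mul_le_mul_of_nonneg_left h1 h.le
    rw [mul_sub, mul_inv_cancel₀ h.ne'] at h2
    nlinarith

private lemma powpow {p : ℕ} (hp : p ≠ 0) {x : ℝ} (hx : 0 ≤ x) :
    (x ^ ((p : ℝ)⁻¹)) ^ p = x := by
  rw [← Real.rpow_natCast (x ^ ((p : ℝ)⁻¹)) p, ← Real.rpow_mul hx,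
    inv_mul_cancel₀ (by exact_mod_cast hp), Real.rpow_one]

private lemma powpow2 {p : ℕ} (hp : p ≠ 0) {x : ℝ} (hx : 0 ≤ x) :
    ((x ^ p : ℝ)) ^ ((p : ℝ)⁻¹) = x := by
  rw [← Real.rpow_natCast x p, ← Real.rpow_mul hx,
    mul_inv_cancel₀ (by exact_mod_cast hp), Real.rpow_one]

theorem stmt9 (p : ℕ) (hp2 : 2 ≤ p) (hpe : Even p)
    (q r : ℝ) (hpq : (p : ℝ) < q) (hr : 1 ≤ r)
    (a b c : ℤ → ℝ)
    (ha : ∀ n, 0 < a n) (hb : ∀ n, 0 < b n) (hc : ∀ n, 0 < c n)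
    (b0 : ℝ) (hb0 : 0 < b0) (hbb : ∀ n, b0 ≤ b n)
    (hbinf : Tendsto b cofinite atTop)
    (c0 : ℝ) (hc0 : 0 < c0) (hcc : ∀ n, c n ≤ c0)
    (hcsum : Summable c)
    (u : ℤ → ℝ) (hu : u ∈ Nset a b c p q r) :
    IsGreatest
      {x : ℝ | ∃ t : ℝ, 0 ≤ t ∧ x = En a b c p q r (fun n => t * u n)}
      (En a b c p q r u) := by
  obtain ⟨⟨huE, huL⟩, hune, hnehari⟩ := hu
  have hp0 : (0 : ℝ) < (p : ℝ) := by exact_mod_cast (by omega : 0 < p)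
  have hpne : p ≠ 0 := by omega
  have hq0 : (0 : ℝ) < q := hp0.trans hpq
  -- nonnegativity of the norm-sum
  have hnsum_nn : ∀ n, 0 ≤ nsum a b p u n := fun n =>
    add_nonneg (mul_nonneg (ha n).le (by positivity)) (mul_nonneg (hb n).le (by positivity))
  have hA_nn : 0 ≤ ∑' n : ℤ, nsum a b p u n := tsum_nonneg hnsum_nn
  have hB_nn : 0 ≤ ∑' n : ℤ, c n * |u n| ^ q :=
    tsum_nonneg fun n => mul_nonneg (hc n).le (Real.rpow_nonneg (abs_nonneg _) q)
  -- Nehari identity : L = A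
  have h1 : (fun n => a n * |dlt u n| ^ (p - 2) * dlt u n * dlt u n
      + b n * |u n| ^ (p - 2) * u n * u n) = nsum a b p u := by
    funext n
    have key : ∀ x : ℝ, |x| ^ (p - 2) * x * x = |x| ^ p := fun x => by
      rw [mul_assoc, ← sq x, ← sq_abs, ← pow_add]
      congr 1; omega
    simp only [nsum]
    rw [show a n * |dlt u n| ^ (p - 2) * dlt u n * dlt u n
        = a n * (|dlt u n| ^ (p - 2) * dlt u n * dlt u n) from by ring, key,
      show b n * |u n| ^ (p - 2) * u n * u n
        = b n * (|u n| ^ (p - 2) * u n * u n) from by ring, key]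
  have h2 : (fun n => c n * |u n| ^ (q - 2) * u n * u n * Real.log (|u n| ^ r))
      = logSummand c q r u := by
    funext n
    simp only [logSummand]
    by_cases h : u n = 0
    · simp [h, Real.zero_rpow hq0.ne']
    · have hab : 0 < |u n| := abs_pos.mpr h
      have e : |u n| ^ (q - 2) * (u n * u n) = |u n| ^ q := by
        rw [← sq (u n), ← sq_abs, ← Real.rpow_natCast |u n| 2, ← Real.rpow_add hab]
        norm_num
      rw [show c n * |u n| ^ (q - 2) * u n * u n * Real.log (|u n| ^ r)
          = c n * (|u n| ^ (q - 2) * (u n * u n)) * Real.log (|u n| ^ r) from by ring, e]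
  have hLA : (∑' n : ℤ, logSummand c q r u n) = ∑' n : ℤ, nsum a b p u n := by
    have := hnehari
    simp only [pr] at this
    rw [h1, h2] at this
    linarith
  -- value of I at u
  have hEnu : En a b c p q r u
      = (1 / (p : ℝ)) * (∑' n : ℤ, nsum a b p u n)
        + (r / q ^ 2) * (∑' n : ℤ, c n * |u n| ^ q)
        - (1 / q) * (∑' n : ℤ, nsum a b p u n) := by
    simp only [En, dnorm]
    rw [powpow hpne hA_nn, hLA]
  -- summability of (c n |u n|^q)
  have hMle : ∀ n, |u n| ≤ ((∑' m : ℤ, nsum a b p u m) / b0) ^ ((p : ℝ)⁻¹) := by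
    intro n
    have h2' : b n * |u n| ^ p ≤ ∑' m : ℤ, nsum a b p u m := by
      have hle := Summable.le_tsum huE n (fun m _ => hnsum_nn m)
      have hd : b n * |u n| ^ p ≤ nsum a b p u n := by
        have : 0 ≤ a n * |dlt u n| ^ p := mul_nonneg (ha n).le (by positivity)
        simp only [nsum]; linarith
      linarith
    have h3 : |u n| ^ p ≤ (∑' m : ℤ, nsum a b p u m) / b0 := by
      rw [le_div_iff₀ hb0]
      nlinarith [pow_nonneg (abs_nonneg (u n)) p, hbb n]
    calc |u n| = ((|u n| ^ p : ℝ)) ^ ((p : ℝ)⁻¹) := (powpow2 hpne (abs_nonneg _)).symm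
      _ ≤ ((∑' m : ℤ, nsum a b p u m) / b0) ^ ((p : ℝ)⁻¹) :=
          Real.rpow_le_rpow (by positivity) h3 (by positivity)
  have hBsum : Summable (fun n => c n * |u n| ^ q) := by
    apply Summable.of_nonneg_of_le
      (fun n => mul_nonneg (hc n).le (Real.rpow_nonneg (abs_nonneg _) q))
      (fun n => ?_) (hcsum.mul_right ((((∑' m : ℤ, nsum a b p u m) / b0) ^ ((p : ℝ)⁻¹)) ^ q))
    exact mul_le_mul_of_nonneg_left
      (Real.rpow_le_rpow (abs_nonneg _) (hMle n) hq0.le) (hc n).le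
  constructor
  · exact ⟨1, zero_le_one, by simp⟩
  · rintro x ⟨t, ht, rfl⟩
    -- compute the pieces of En (t • u)
    have hnseq : nsum a b p (fun n => t * u n) = fun n => t ^ p * nsum a b p u n := by
      funext n
      simp only [nsum, dlt]
      rw [show t * u (n + 1) - t * u n = t * (u (n + 1) - u n) from by ring,
        abs_mul, abs_mul, abs_of_nonneg ht, mul_pow, mul_pow]
      ring
    have hdnt : dnorm a b p (fun n => t * u n) ^ p = t ^ p * ∑' n : ℤ, nsum a b p u n := by
      rw [dnorm, hnseq, tsum_mul_left, powpow hpne (by positivity)]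
    have hBt : (∑' n : ℤ, c n * |t * u n| ^ q)
        = t ^ q * ∑' n : ℤ, c n * |u n| ^ q := by
      rw [show (fun n => c n * |t * u n| ^ q)
          = fun n => t ^ q * (c n * |u n| ^ q) from funext fun n => by
        rw [abs_mul, abs_of_nonneg ht, Real.mul_rpow ht (abs_nonneg _)]; ring]
      exact tsum_mul_left
    have hLt : (∑' n : ℤ, logSummand c q r (fun m => t * u m) n)
        = t ^ q * (∑' n : ℤ, logSummand c q r u n)
          + (r * t ^ q * Real.log t) * ∑' n : ℤ, c n * |u n| ^ q := by
      have hpt : logSummand c q r (fun m => t * u m)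
          = fun n => t ^ q * logSummand c q r u n
            + (r * t ^ q * Real.log t) * (c n * |u n| ^ q) := by
        funext n
        simp only [logSummand]
        by_cases h : u n = 0
        · simp [h, Real.zero_rpow hq0.ne']
        · rcases eq_or_lt_of_le ht with h0 | h0
          · rw [← h0]
            simp [Real.zero_rpow hq0.ne']
          · have hab : 0 < |u n| := abs_pos.mpr h
            have htu : 0 < t * |u n| := mul_pos h0 hab
            rw [abs_mul, abs_of_nonneg ht, Real.mul_rpow ht (abs_nonneg _),
              Real.log_rpow htu, Real.log_mul h0.ne' hab.ne', Real.log_rpow hab]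
            ring
      rw [hpt, Summable.tsum_add (huL.mul_left _) (hBsum.mul_left _), tsum_mul_left, tsum_mul_left]
    have hEnt : En a b c p q r (fun n => t * u n)
        = (1 / (p : ℝ)) * (t ^ p * ∑' n : ℤ, nsum a b p u n)
          + (r / q ^ 2) * (t ^ q * ∑' n : ℤ, c n * |u n| ^ q)
          - (1 / q) * (t ^ q * (∑' n : ℤ, nsum a b p u n)
            + (r * t ^ q * Real.log t) * ∑' n : ℤ, c n * |u n| ^ q) := by
      simp only [En]
      rw [hdnt, hBt, hLt, hLA]
    -- the scalar inequalities
    have hgeo : (t : ℝ) ^ p ≤ ((p : ℝ) / q) * t ^ q + (1 - (p : ℝ) / q) := by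
      have hw2 : (0 : ℝ) ≤ 1 - (p : ℝ) / q := by
        rw [sub_nonneg, div_le_one hq0]; exact hpq.le
      have h := Real.geom_mean_le_arith_mean2_weighted
        (by positivity : (0 : ℝ) ≤ (p : ℝ) / q) hw2
        (Real.rpow_nonneg ht q) zero_le_one (by ring)
      rw [Real.one_rpow, mul_one, mul_one] at h
      calc (t : ℝ) ^ p = (t ^ q) ^ ((p : ℝ) / q) := by
            rw [← Real.rpow_natCast t p, ← Real.rpow_mul ht]
            congr 1; field_simp
        _ ≤ ((p : ℝ) / q) * t ^ q + (1 - (p : ℝ) / q) := h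
    have hgeo' : q * t ^ p ≤ (p : ℝ) * t ^ q + (q - (p : ℝ)) := by
      have h := mul_le_mul_of_nonneg_left hgeo hq0.le
      have e : q * (((p : ℝ) / q) * t ^ q + (1 - (p : ℝ) / q))
          = (p : ℝ) * t ^ q + (q - (p : ℝ)) := by
        field_simp
      linarith [e ▸ h]
    have c1 : 0 ≤ 1 / (p : ℝ) - t ^ p / p + t ^ q / q - 1 / q := by
      have e : 1 / (p : ℝ) - t ^ p / p + t ^ q / q - 1 / q
          = (((p : ℝ) * t ^ q + (q - (p : ℝ))) - q * t ^ p) / ((p : ℝ) * q) := by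
        field_simp
        ring
      rw [e]
      apply div_nonneg (by linarith) (by positivity)
    have hlogeq : (t ^ q) * Real.log (t ^ q) = q * ((t ^ q) * Real.log t) := by
      rcases eq_or_lt_of_le ht with h0 | h0
      · rw [← h0, Real.zero_rpow hq0.ne']; ring
      · rw [Real.log_rpow h0]; ring
    have c2 : 0 ≤ 1 - t ^ q + q * ((t ^ q) * Real.log t) := by
      have := slog (t ^ q) (Real.rpow_nonneg ht q)
      linarith [hlogeq ▸ this]
    -- conclude
    rw [hEnt, hEnu]
    have hrB : 0 ≤ r * (∑' n : ℤ, c n * |u n| ^ q) / q ^ 2 :=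
      div_nonneg (mul_nonneg (by linarith) hB_nn) (by positivity)
    set A := ∑' n : ℤ, nsum a b p u n with hAdef
    set B := ∑' n : ℤ, c n * |u n| ^ q with hBdef
    have key : (1 / (p : ℝ) * A + r / q ^ 2 * B - 1 / q * A)
        - (1 / (p : ℝ) * (t ^ p * A) + r / q ^ 2 * (t ^ q * B)
          - 1 / q * (t ^ q * A + (r * t ^ q * Real.log t) * B))
        = A * (1 / (p : ℝ) - t ^ p / p + t ^ q / q - 1 / q)
          + (r * B / q ^ 2) * (1 - t ^ q + q * ((t ^ q) * Real.log t)) := by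
      have hqne : q ≠ 0 := hq0.ne'
      field_simp
      ring
    linarith [mul_nonneg hA_nn c1, mul_nonneg hrB c2, key]

end DPLap
end
end

section
/- For every u ∈ 𝒟 with u ≠ 0 there exists a unique real t0 > 0 such that t0·u ∈ 𝒩, i.e. ⟨I'(t0·u), t0·u⟩ = 0. -/
noncomputable section

open Real Filter Set

namespace DPLap

private lemma phi_exists_unique (α β C A : ℝ) (hα : 0 < α) (hβ : 0 < β) (hA : 0 < A) :
    ∃! t : ℝ, 0 < t ∧ t ^ α * (β * Real.log t + C) = A := by
  set s : ℝ := Real.exp (-C / β) with hs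
  have hs0 : 0 < s := Real.exp_pos _
  have hlogs : β * Real.log s + C = 0 := by
    rw [hs, Real.log_exp]; field_simp; ring
  have hmono : StrictMonoOn (fun t => t ^ α * (β * Real.log t + C)) (Set.Ici s) := by
    intro t1 h1 t2 h2 h12
    simp only [Set.mem_Ici] at h1 h2
    have ht1 : 0 < t1 := lt_of_lt_of_le hs0 h1
    have ht2 : 0 < t2 := ht1.trans h12
    have hl1 : Real.log s ≤ Real.log t1 := Real.log_le_log hs0 h1
    have hm1 : 0 ≤ β * Real.log t1 + C := by nlinarith
    have hl2 : Real.log t1 < Real.log t2 := Real.log_lt_log ht1 h12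
    have hm2 : β * Real.log t1 + C < β * Real.log t2 + C := by nlinarith
    have hr : t1 ^ α < t2 ^ α := Real.rpow_lt_rpow ht1.le h12 hα
    have h2p : 0 < t2 ^ α := Real.rpow_pos_of_pos ht2 α
    calc t1 ^ α * (β * Real.log t1 + C)
        ≤ t2 ^ α * (β * Real.log t1 + C) := mul_le_mul_of_nonneg_right hr.le hm1
      _ < t2 ^ α * (β * Real.log t2 + C) := mul_lt_mul_of_pos_left hm2 h2p
  have hsol_mem : ∀ t : ℝ, 0 < t → t ^ α * (β * Real.log t + C) = A → t ∈ Set.Ici s := by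
    intro t ht heq
    by_contra hlt
    simp only [Set.mem_Ici, not_le] at hlt
    have hll : Real.log t < Real.log s := Real.log_lt_log ht hlt
    have hmlt : β * Real.log t + C < 0 := by nlinarith
    have hp : 0 < t ^ α := Real.rpow_pos_of_pos ht α
    have := mul_neg_of_pos_of_neg hp hmlt
    rw [heq] at this
    linarith
  set L : ℝ := max (-C / β) (max 0 ((A - C) / β)) with hL
  set T : ℝ := Real.exp L with hT
  have hT0 : 0 < T := Real.exp_pos _
  have hsT : s ≤ T := Real.exp_le_exp.mpr (le_max_left _ _)
  have hT1 : (1:ℝ) ≤ T := by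
    rw [← Real.exp_zero]
    exact Real.exp_le_exp.mpr ((le_max_left 0 _).trans (le_max_right _ _))
  have hmT : A ≤ β * Real.log T + C := by
    have h1 : (A - C) / β ≤ L := (le_max_right 0 _).trans (le_max_right _ _)
    have h2 : A - C ≤ L * β := (div_le_iff₀ hβ).mp h1
    have h2' : A - C ≤ β * L := by rw [mul_comm]; exact h2
    rw [hT, Real.log_exp]
    linarith
  have hTA : A ≤ T ^ α * (β * Real.log T + C) := by
    have hTα : (1:ℝ) ≤ T ^ α := by
      calc (1:ℝ) = 1 ^ α := (Real.one_rpow α).symm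
        _ ≤ T ^ α := Real.rpow_le_rpow zero_le_one hT1 hα.le
    calc A ≤ β * Real.log T + C := hmT
      _ ≤ T ^ α * (β * Real.log T + C) := le_mul_of_one_le_left (by linarith) hTα
  have hcont : ContinuousOn (fun t => t ^ α * (β * Real.log t + C)) (Set.Icc s T) := by
    intro t ht
    have ht0 : 0 < t := lt_of_lt_of_le hs0 ht.1
    apply ContinuousAt.continuousWithinAt
    exact (Real.continuousAt_rpow_const t α (Or.inl ht0.ne')).mul
      ((continuousAt_const.mul (Real.continuousAt_log ht0.ne')).add continuousAt_const)
  have hIVT := intermediate_value_Icc hsT hcont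
  have hAmem : A ∈ Set.Icc ((fun t => t ^ α * (β * Real.log t + C)) s)
      ((fun t => t ^ α * (β * Real.log t + C)) T) := by
    constructor
    · show s ^ α * (β * Real.log s + C) ≤ A
      rw [hlogs, mul_zero]; exact hA.le
    · exact hTA
  obtain ⟨t0, ht0mem, hφ⟩ := hIVT hAmem
  have ht0pos : 0 < t0 := lt_of_lt_of_le hs0 ht0mem.1
  refine ⟨t0, ⟨ht0pos, hφ⟩, ?_⟩
  rintro t ⟨ht, heq⟩
  exact hmono.injOn (hsol_mem t ht heq) (hsol_mem t0 ht0pos hφ) (heq.trans hφ.symm)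

theorem stmt10 (p : ℕ) (hp2 : 2 ≤ p) (hpe : Even p)
    (q r : ℝ) (hpq : (p : ℝ) < q) (hr : 1 ≤ r)
    (a b c : ℤ → ℝ)
    (ha : ∀ n, 0 < a n) (hb : ∀ n, 0 < b n) (hc : ∀ n, 0 < c n)
    (b0 : ℝ) (hb0 : 0 < b0) (hbb : ∀ n, b0 ≤ b n)
    (hbinf : Tendsto b cofinite atTop)
    (c0 : ℝ) (hc0 : 0 < c0) (hcc : ∀ n, c n ≤ c0)
    (hcsum : Summable c)
    (u : ℤ → ℝ) (hu : memD a b c p q r u) (hu0 : u ≠ 0) :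
    ∃! t0 : ℝ, 0 < t0 ∧ (fun n => t0 * u n) ∈ Nset a b c p q r := by
  have hp0 : p ≠ 0 := by omega
  have hpR : (0:ℝ) < p := by exact_mod_cast Nat.pos_of_ne_zero hp0
  have hq0 : (0:ℝ) < q := hpR.trans hpq
  have hq2 : q ≠ 0 := hq0.ne'
  obtain ⟨n0, hn0⟩ : ∃ n, u n ≠ 0 := Function.ne_iff.mp hu0
  have hnn : ∀ v : ℤ → ℝ, ∀ n, 0 ≤ nsum a b p v n := fun v n =>
    add_nonneg (mul_nonneg (ha n).le (pow_nonneg (abs_nonneg _) _))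
      (mul_nonneg (hb n).le (pow_nonneg (abs_nonneg _) _))
  set A := ∑' n, nsum a b p u n with hAdef
  have hApos : 0 < A := by
    refine Summable.tsum_pos hu.1 (hnn u) n0 ?_
    have : 0 < b n0 * |u n0| ^ p := mul_pos (hb n0) (pow_pos (abs_pos.mpr hn0) p)
    unfold nsum
    have := mul_nonneg (ha n0).le (pow_nonneg (abs_nonneg (dlt u n0)) p)
    linarith
  -- uniform bound on |u n|
  have hb_le : ∀ n, b n * |u n| ^ p ≤ A := fun n =>
    (le_add_of_nonneg_left (mul_nonneg (ha n).le (pow_nonneg (abs_nonneg _) _))).trans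
      (Summable.le_tsum hu.1 n fun j _ => hnn u j)
  have hup : ∀ n, |u n| ^ p ≤ A / b0 := fun n => by
    rw [le_div_iff₀ hb0]
    calc |u n| ^ p * b0 = b0 * |u n| ^ p := mul_comm _ _
      _ ≤ b n * |u n| ^ p := mul_le_mul_of_nonneg_right (hbb n) (pow_nonneg (abs_nonneg _) _)
      _ ≤ A := hb_le n
  set M := (A / b0) ^ ((p:ℝ)⁻¹) with hMdef
  have huM : ∀ n, |u n| ≤ M := fun n => by
    have h1 : ((|u n| ^ p : ℝ)) ^ ((p:ℝ)⁻¹) ≤ M :=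
      Real.rpow_le_rpow (by positivity) (hup n) (by positivity)
    rwa [← Real.rpow_natCast |u n| p, ← Real.rpow_mul (abs_nonneg _),
      mul_inv_cancel₀ (by exact_mod_cast hp0 : (p:ℝ) ≠ 0), Real.rpow_one] at h1
  set w : ℤ → ℝ := fun n => c n * |u n| ^ q with hwdef
  have hwsum : Summable w :=
    Summable.of_nonneg_of_le
      (fun n => mul_nonneg (hc n).le (Real.rpow_nonneg (abs_nonneg _) q))
      (fun n => mul_le_mul_of_nonneg_left
        (Real.rpow_le_rpow (abs_nonneg _) (huM n) hq0.le) (hc n).le)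
      (hcsum.mul_right (M ^ q))
  set B := ∑' n, w n with hBdef
  have hBpos : 0 < B :=
    Summable.tsum_pos hwsum (fun n => mul_nonneg (hc n).le (Real.rpow_nonneg (abs_nonneg _) q)) n0
      (mul_pos (hc n0) (Real.rpow_pos_of_pos (abs_pos.mpr hn0) q))
  set C := ∑' n, logSummand c q r u n with hCdef
  have hCsum : Summable (logSummand c q r u) := hu.2
  -- pointwise algebra
  have H1 : ∀ x : ℝ, |x| ^ (p - 2) * x * x = |x| ^ p := fun x => by
    have hexp : p - 2 + 1 + 1 = p := by omega
    calc |x| ^ (p-2) * x * x = |x| ^ (p-2) * |x| * |x| := by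
          rw [mul_assoc, mul_assoc, abs_mul_abs_self]
      _ = |x| ^ (p - 2 + 1 + 1) := by rw [pow_succ, pow_succ]
      _ = |x| ^ p := by rw [hexp]
  have H2 : ∀ x : ℝ, |x| ^ (q - 2) * x * x = |x| ^ q := fun x => by
    rcases eq_or_ne x 0 with h | h
    · simp [h, Real.zero_rpow hq2]
    · have hx : 0 < |x| := abs_pos.mpr h
      have h2 : |x| * |x| = |x| ^ (2:ℝ) := by
        rw [show (2:ℝ) = ((2:ℕ):ℝ) by norm_num, Real.rpow_natCast]; ring
      rw [mul_assoc, ← abs_mul_abs_self x, h2, ← Real.rpow_add hx]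
      norm_num
  have hdlt : ∀ t : ℝ, ∀ n, dlt (fun m => t * u m) n = t * dlt u n := fun t n => by
    simp only [dlt]; ring
  have key1 : ∀ t : ℝ, 0 < t → ∀ n,
      nsum a b p (fun m => t * u m) n = t ^ p * nsum a b p u n := by
    intro t ht n
    simp only [nsum, hdlt t, abs_mul, abs_of_pos ht, mul_pow]
    ring
  have key2 : ∀ t : ℝ, 0 < t → ∀ n,
      logSummand c q r (fun m => t * u m) n
        = t ^ q * (r * Real.log t) * w n + t ^ q * logSummand c q r u n := by
    intro t ht n
    rcases eq_or_ne (u n) 0 with h | h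
    · simp [logSummand, hwdef, h, Real.zero_rpow hq2]
    · have hu' : 0 < |u n| := abs_pos.mpr h
      have habs : |t * u n| = t * |u n| := by rw [abs_mul, abs_of_pos ht]
      simp only [logSummand, hwdef, habs]
      rw [Real.mul_rpow ht.le (abs_nonneg _), Real.log_rpow (mul_pos ht hu'),
        Real.log_mul ht.ne' hu'.ne', Real.log_rpow hu']
      ring
  have eNS : ∀ v : ℤ → ℝ, ∀ n, a n * |dlt v n| ^ (p - 2) * dlt v n * dlt v n
      + b n * |v n| ^ (p - 2) * v n * v n = nsum a b p v n := fun v n => by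
    unfold nsum
    rw [show a n * |dlt v n| ^ (p-2) * dlt v n * dlt v n
        = a n * (|dlt v n| ^ (p-2) * dlt v n * dlt v n) by ring,
      show b n * |v n| ^ (p-2) * v n * v n = b n * (|v n| ^ (p-2) * v n * v n) by ring,
      H1, H1]
  have eLS : ∀ v : ℤ → ℝ, ∀ n, c n * |v n| ^ (q - 2) * v n * v n * Real.log (|v n| ^ r)
      = logSummand c q r v n := fun v n => by
    unfold logSummand
    rw [show c n * |v n| ^ (q-2) * v n * v n * Real.log (|v n| ^ r)
        = c n * (|v n| ^ (q-2) * v n * v n) * Real.log (|v n| ^ r) by ring, H2]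
  have key3 : ∀ t : ℝ, 0 < t →
      pr a b c p q r (fun m => t * u m) (fun m => t * u m)
        = t ^ p * A - (t ^ q * (r * Real.log t) * B + t ^ q * C) := by
    intro t ht
    unfold pr
    rw [tsum_congr (fun n => eNS (fun m => t * u m) n),
      tsum_congr (fun n => eLS (fun m => t * u m) n),
      tsum_congr (key1 t ht), tsum_congr (key2 t ht), tsum_mul_left,
      Summable.tsum_add (hwsum.mul_left _) (hCsum.mul_left _), tsum_mul_left, tsum_mul_left]
  have hmemD : ∀ t : ℝ, 0 < t → memD a b c p q r (fun m => t * u m) := by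
    intro t ht
    constructor
    · exact ((hu.1.mul_left (t ^ p)).congr fun n => (key1 t ht n).symm)
    · exact (((hwsum.mul_left (t ^ q * (r * Real.log t))).add
        (hCsum.mul_left (t ^ q))).congr fun n => (key2 t ht n).symm)
  have hne : ∀ t : ℝ, 0 < t → (fun m => t * u m) ≠ 0 := by
    intro t ht hcontra
    have h := congrFun hcontra n0
    simp only [Pi.zero_apply, mul_eq_zero] at h
    rcases h with h | h
    · exact ht.ne' h
    · exact hn0 h
  have hEquiv : ∀ t : ℝ, 0 < t →
      ((fun n => t * u n) ∈ Nset a b c p q r ↔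
        t ^ (q - (p:ℝ)) * (r * B * Real.log t + C) = A) := by
    intro t ht
    have hpow : t ^ q = (t ^ p) * t ^ (q - (p:ℝ)) := by
      rw [← Real.rpow_natCast t p, ← Real.rpow_add ht]
      congr 1
      ring
    have htp : (0:ℝ) < t ^ p := pow_pos ht p
    constructor
    · rintro ⟨-, -, hpr⟩
      rw [key3 t ht, hpow] at hpr
      have h0 : t ^ p * (A - t ^ (q - (p:ℝ)) * (r * B * Real.log t + C)) = 0 := by
        rw [← hpr]; ring
      have h1 := (mul_eq_zero.mp h0).resolve_left htp.ne'
      have h2 := sub_eq_zero.mp h1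
      exact h2.symm
    · intro hphi
      refine ⟨hmemD t ht, hne t ht, ?_⟩
      rw [key3 t ht, hpow, ← hphi]
      ring
  obtain ⟨t0, ⟨ht0, hphi0⟩, huniq⟩ :=
    phi_exists_unique (q - (p:ℝ)) (r * B) C A (by linarith)
      (mul_pos (by linarith) hBpos) hApos
  exact ⟨t0, ⟨ht0, (hEquiv t0 ht0).mpr hphi0⟩,
    fun t ⟨htp, htN⟩ => huniq t ⟨htp, (hEquiv t htp).mp htN⟩⟩


end DPLap
end
end
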